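/- arXiv:1607.02741 — 3 statements merged into one kernel-verified Lean document; each statement's English description precedes it below -/
import Mathlib

section
/- Let μ be a probability measure on ℝ³ invariant under the central symmetry (x,y,z) ↦ (−x,−y,−z), and let C > 0. If for every Schwartz function f : ℝ³ → ℝ one has Ent_μ(f²) ≤ C ∫_{ℝ³} ( (Xf)² + (Yf)² ) dμ, then for every Schwartz function f : ℝ³ → ℝ one has Ent_μ(f²) ≤ C ∫_{ℝ³} ( (∂_x f)² + (∂_y f)² + ((x²+y²)/4)(∂_z f)² ) dμ(x,y,z). -/
/-!
Composing with the central symmetry `h ↦ -h` turns the left-invariant fields `X, Y` into minus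
the right-invariant fields `X̃ = ∂ₓ + (y/2) ∂_z`, `Ỹ = ∂_y - (x/2) ∂_z`. Since `μ`, and hence the
entropy, is invariant under the symmetry, the inequality for `f ∘ (-·)` is the same inequality for
`f` with `X̃, Ỹ` in place of `X, Y`. Averaging the two, the cross terms `∓ y ∂ₓf ∂_z f` and
`± x ∂_y f ∂_z f` cancel:
`(Xf)² + (Yf)² + (X̃f)² + (Ỹf)² = 2 ((∂ₓf)² + (∂_yf)² + (x² + y²)/4 (∂_zf)²)`.
The averaging is legitimate because the fields have linear coefficients, so they map Schwartz
functions to Schwartz functions, which lie in every `Lᵖ(μ)`.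
-/

open MeasureTheory ProbabilityTheory

noncomputable section

/-- The Heisenberg group as ℝ³. -/
abbrev H : Type := ℝ × ℝ × ℝ

/-- Entropy of `f` with respect to `μ`. -/
def Ent {α : Type*} [MeasurableSpace α] (μ : Measure α) (f : α → ℝ) : ℝ :=
  ∫ a, f a * Real.log (f a) ∂μ - (∫ a, f a ∂μ) * Real.log (∫ a, f a ∂μ)

/-- Partial derivative in the first coordinate. -/
def pdx (f : H → ℝ) (p : H) : ℝ := deriv (fun t => f (t, p.2.1, p.2.2)) p.1

/-- Partial derivative in the second coordinate. -/
def pdy (f : H → ℝ) (p : H) : ℝ := deriv (fun t => f (p.1, t, p.2.2)) p.2.1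

/-- Partial derivative in the third coordinate. -/
def pdz (f : H → ℝ) (p : H) : ℝ := deriv (fun t => f (p.1, p.2.1, t)) p.2.2

/-- The left-invariant vector field `X`. -/
def Xop (f : H → ℝ) (p : H) : ℝ := pdx f p - p.2.1 / 2 * pdz f p

/-- The left-invariant vector field `Y`. -/
def Yop (f : H → ℝ) (p : H) : ℝ := pdy f p + p.1 / 2 * pdz f p

/-- The left-invariant vector field `Z`. -/
def Zop (f : H → ℝ) (p : H) : ℝ := pdz f p


open scoped LineDeriv SchwartzMap ENNReal

def XRop (f : H → ℝ) (p : H) : ℝ := pdx f p + p.2.1 / 2 * pdz f p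

def YRop (f : H → ℝ) (p : H) : ℝ := pdy f p - p.1 / 2 * pdz f p

theorem ent_comp_neg {G : Type*} [MeasurableSpace G] [AddGroup G] [MeasurableNeg G]
    (μ : Measure G) [μ.IsNegInvariant] (f : G → ℝ) :
    Ent μ (fun x => f (-x)) = Ent μ f := by
  unfold Ent
  rw [integral_neg_eq_self (fun x => f x * Real.log (f x)), integral_neg_eq_self f]

theorem SchwartzMap.memLp_fderiv_add_mul_fderiv {E : Type*} [NormedAddCommGroup E]
    [NormedSpace ℝ E] [MeasurableSpace E] [OpensMeasurableSpace E] (f : 𝓢(E, ℝ)) (v w : E)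
    (ℓ : E →L[ℝ] ℝ) (q : ℝ≥0∞) (μ : Measure E) [μ.HasTemperateGrowth] :
    MemLp (fun x => fderiv ℝ f x v + ℓ x * fderiv ℝ f x w) q μ := by
  convert (∂_{v} f + smulLeftCLM ℝ ℓ (∂_{w} f)).memLp q μ using 1
  ext x
  simp [smulLeftCLM_apply_apply ℓ.hasTemperateGrowth, lineDerivOp_apply_eq_fderiv]

section PartialDerivatives

variable {f : H → ℝ} {p : H}

theorem pdx_eq_fderiv (hf : DifferentiableAt ℝ f p) : pdx f p = fderiv ℝ f p (1, 0, 0) :=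
  (hf.hasFDerivAt.comp_hasDerivAt p.1 ((hasDerivAt_id' p.1).prodMk
    ((hasDerivAt_const p.1 p.2.1).prodMk (hasDerivAt_const p.1 p.2.2)))).deriv

theorem pdy_eq_fderiv (hf : DifferentiableAt ℝ f p) : pdy f p = fderiv ℝ f p (0, 1, 0) :=
  (hf.hasFDerivAt.comp_hasDerivAt p.2.1 ((hasDerivAt_const p.2.1 p.1).prodMk
    ((hasDerivAt_id' p.2.1).prodMk (hasDerivAt_const p.2.1 p.2.2)))).deriv

theorem pdz_eq_fderiv (hf : DifferentiableAt ℝ f p) : pdz f p = fderiv ℝ f p (0, 0, 1) :=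
  (hf.hasFDerivAt.comp_hasDerivAt p.2.2 ((hasDerivAt_const p.2.2 p.1).prodMk
    ((hasDerivAt_const p.2.2 p.2.1).prodMk (hasDerivAt_id' p.2.2)))).deriv

variable (f p)

theorem pdx_comp_neg : pdx (fun h => f (-h)) p = -pdx f (-p) :=
  deriv_comp_neg (fun t => f (t, -p.2.1, -p.2.2)) p.1

theorem pdy_comp_neg : pdy (fun h => f (-h)) p = -pdy f (-p) :=
  deriv_comp_neg (fun t => f (-p.1, t, -p.2.2)) p.2.1

theorem pdz_comp_neg : pdz (fun h => f (-h)) p = -pdz f (-p) :=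
  deriv_comp_neg (fun t => f (-p.1, -p.2.1, t)) p.2.2

theorem Xop_comp_neg : Xop (fun h => f (-h)) p = -XRop f (-p) := by
  simp only [Xop, XRop, pdx_comp_neg, pdz_comp_neg, Prod.snd_neg, Prod.fst_neg]
  ring

theorem Yop_comp_neg : Yop (fun h => f (-h)) p = -YRop f (-p) := by
  simp only [Yop, YRop, pdy_comp_neg, pdz_comp_neg, Prod.fst_neg]
  ring

theorem sq_Xop_add_sq_Yop_add_sq_XRop_add_sq_YRop :
    Xop f p ^ 2 + Yop f p ^ 2 + (XRop f p ^ 2 + YRop f p ^ 2) =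
      2 * (pdx f p ^ 2 + pdy f p ^ 2 + (p.1 ^ 2 + p.2.1 ^ 2) / 4 * pdz f p ^ 2) := by
  simp only [Xop, Yop, XRop, YRop]
  ring

end PartialDerivatives

section Integrability

variable (f : 𝓢(H, ℝ)) (q : ℝ≥0∞) (μ : Measure H) [μ.HasTemperateGrowth]

theorem memLp_Xop : MemLp (Xop f) q μ := by
  convert f.memLp_fderiv_add_mul_fderiv (1, 0, 0) (0, 0, 1)
    (-(1 / 2 : ℝ) • (.fst ℝ ℝ ℝ ∘L .snd ℝ ℝ (ℝ × ℝ))) q μ using 1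
  ext p
  simp only [Xop, pdx_eq_fderiv f.differentiableAt, pdz_eq_fderiv f.differentiableAt,
    smul_apply, ContinuousLinearMap.comp_apply, ContinuousLinearMap.coe_fst',
    ContinuousLinearMap.coe_snd', smul_eq_mul]
  ring

theorem memLp_Yop : MemLp (Yop f) q μ := by
  convert f.memLp_fderiv_add_mul_fderiv (0, 1, 0) (0, 0, 1)
    ((1 / 2 : ℝ) • .fst ℝ ℝ (ℝ × ℝ)) q μ using 1
  ext p
  simp only [Yop, pdy_eq_fderiv f.differentiableAt, pdz_eq_fderiv f.differentiableAt,
    smul_apply, ContinuousLinearMap.coe_fst', smul_eq_mul]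
  ring

theorem memLp_XRop : MemLp (XRop f) q μ := by
  convert f.memLp_fderiv_add_mul_fderiv (1, 0, 0) (0, 0, 1)
    ((1 / 2 : ℝ) • (.fst ℝ ℝ ℝ ∘L .snd ℝ ℝ (ℝ × ℝ))) q μ using 1
  ext p
  simp only [XRop, pdx_eq_fderiv f.differentiableAt, pdz_eq_fderiv f.differentiableAt,
    smul_apply, ContinuousLinearMap.comp_apply, ContinuousLinearMap.coe_fst',
    ContinuousLinearMap.coe_snd', smul_eq_mul]
  ring

theorem memLp_YRop : MemLp (YRop f) q μ := by
  convert f.memLp_fderiv_add_mul_fderiv (0, 1, 0) (0, 0, 1)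
    (-(1 / 2 : ℝ) • .fst ℝ ℝ (ℝ × ℝ)) q μ using 1
  ext p
  simp only [YRop, pdy_eq_fderiv f.differentiableAt, pdz_eq_fderiv f.differentiableAt,
    smul_apply, ContinuousLinearMap.coe_fst', smul_eq_mul]
  ring

end Integrability

theorem ent_sq_le_XRop_YRop_of_Xop_Yop (μ : Measure H) [μ.IsNegInvariant] (C : ℝ)
    (hLSI : ∀ f : 𝓢(H, ℝ), Ent μ (fun h => f h ^ 2) ≤ C * ∫ h, (Xop f h ^ 2 + Yop f h ^ 2) ∂μ)
    (f : 𝓢(H, ℝ)) :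
    Ent μ (fun h => f h ^ 2) ≤ C * ∫ h, (XRop f h ^ 2 + YRop f h ^ 2) ∂μ := by
  have := hLSI (SchwartzMap.compCLMOfContinuousLinearEquiv ℝ (.neg ℝ) f)
  simp only [SchwartzMap.compCLMOfContinuousLinearEquiv_apply, Function.comp_def,
    ContinuousLinearEquiv.coe_neg, Pi.neg_apply, id_eq, Xop_comp_neg, Yop_comp_neg, neg_sq] at this
  rwa [ent_comp_neg μ (fun h => f h ^ 2),
    integral_neg_eq_self (fun h => XRop f h ^ 2 + YRop f h ^ 2)] at this

theorem li_lsi_symmetrized_general (μ : Measure H) [IsProbabilityMeasure μ]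
    (hsym : μ.map (fun h : H => ((-h.1, -h.2.1, -h.2.2) : H)) = μ)
    (C : ℝ)
    (hLSI : ∀ f : SchwartzMap H ℝ,
      Ent μ (fun h => f h ^ 2) ≤ C * ∫ h, ((Xop f h) ^ 2 + (Yop f h) ^ 2) ∂μ) :
    ∀ f : SchwartzMap H ℝ,
      Ent μ (fun h => f h ^ 2) ≤
        C * ∫ h, ((pdx f h) ^ 2 + (pdy f h) ^ 2
          + (h.1 ^ 2 + h.2.1 ^ 2) / 4 * (pdz f h) ^ 2) ∂μ := by
  have : μ.IsNegInvariant := ⟨hsym⟩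
  intro f
  have hA : Integrable (fun h => Xop f h ^ 2 + Yop f h ^ 2) μ :=
    (memLp_Xop f 2 μ).integrable_sq.add (memLp_Yop f 2 μ).integrable_sq
  have hB : Integrable (fun h => XRop f h ^ 2 + YRop f h ^ 2) μ :=
    (memLp_XRop f 2 μ).integrable_sq.add (memLp_YRop f 2 μ).integrable_sq
  have hmean : ∫ h, (pdx f h ^ 2 + pdy f h ^ 2 + (h.1 ^ 2 + h.2.1 ^ 2) / 4 * pdz f h ^ 2) ∂μ =
      (∫ h, (Xop f h ^ 2 + Yop f h ^ 2) ∂μ + ∫ h, (XRop f h ^ 2 + YRop f h ^ 2) ∂μ) / 2 := by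
    rw [← integral_add hA hB, ← integral_div]
    congr 1 with h
    linarith [sq_Xop_add_sq_Yop_add_sq_XRop_add_sq_YRop f h]
  rw [hmean]
  linarith [hLSI f, ent_sq_le_XRop_YRop_of_Xop_Yop μ C hLSI f]

theorem li_lsi_symmetrized (μ : Measure H) [IsProbabilityMeasure μ]
    (hsym : μ.map (fun h : H => ((-h.1, -h.2.1, -h.2.2) : H)) = μ)
    (C : ℝ) (hC : 0 < C)
    (hLSI : ∀ f : SchwartzMap H ℝ,
      Ent μ (fun h => f h ^ 2) ≤ C * ∫ h, ((Xop f h) ^ 2 + (Yop f h) ^ 2) ∂μ) :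
    ∀ f : SchwartzMap H ℝ,
      Ent μ (fun h => f h ^ 2) ≤
        C * ∫ h, ((pdx f h) ^ 2 + (pdy f h) ^ 2
          + (h.1 ^ 2 + h.2.1 ^ 2) / 4 * (pdz f h) ^ 2) ∂μ :=
  li_lsi_symmetrized_general μ hsym C hLSI
end
end

section
/- For every smooth function f : ℝ³ → ℝ and every point of ℝ³, with L := X² + Y² and Γ^hori(f,f) := (Xf)² + (Yf)²: (1/2)( L(Γ^hori(f,f)) − 2[ (Xf)·X(Lf) + (Yf)·Y(Lf) ] ) = (X²f)² + (Y²f)² + (XYf)² + (YXf)² − 2(Xf)(YZf) + 2(Yf)(XZf), where X²f = X(Xf), XYf = X(Yf), YXf = Y(Xf), YZf = Y(Zf), XZf = X(Zf). -/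
open MeasureTheory ProbabilityTheory

noncomputable section

/-- The sub-Laplacian `L = X² + Y²`. -/
def Lop (f : H → ℝ) : H → ℝ := fun p => Xop (Xop f) p + Yop (Yop f) p

def vX (p : H) : H := (1, 0, -(p.2.1 / 2))
def vY (p : H) : H := (0, 1, p.1 / 2)
def e3 : H := (0, 0, 1)

lemma pdx_eq {g : H → ℝ} {p : H} (hg : DifferentiableAt ℝ g p) :
    pdx g p = fderiv ℝ g p (1, 0, 0) := by
  have hc : HasDerivAt (fun t : ℝ => (t, p.2.1, p.2.2) : ℝ → H) (1, 0, 0) p.1 :=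
    (hasDerivAt_id p.1).prodMk (hasDerivAt_const _ _)
  have := (hg.hasFDerivAt.comp_hasDerivAt p.1 hc)
  simpa [pdx, Function.comp_def] using this.deriv

lemma pdy_eq {g : H → ℝ} {p : H} (hg : DifferentiableAt ℝ g p) :
    pdy g p = fderiv ℝ g p (0, 1, 0) := by
  have hc : HasDerivAt (fun t : ℝ => (p.1, t, p.2.2) : ℝ → H) (0, 1, 0) p.2.1 :=
    (hasDerivAt_const _ _).prodMk ((hasDerivAt_id _).prodMk (hasDerivAt_const _ _))
  have := (hg.hasFDerivAt.comp_hasDerivAt p.2.1 hc)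
  simpa [pdy, Function.comp_def] using this.deriv

lemma pdz_eq {g : H → ℝ} {p : H} (hg : DifferentiableAt ℝ g p) :
    pdz g p = fderiv ℝ g p (0, 0, 1) := by
  have hc : HasDerivAt (fun t : ℝ => (p.1, p.2.1, t) : ℝ → H) (0, 0, 1) p.2.2 :=
    (hasDerivAt_const _ _).prodMk ((hasDerivAt_const _ _).prodMk (hasDerivAt_id _))
  have := (hg.hasFDerivAt.comp_hasDerivAt p.2.2 hc)
  simpa [pdz, Function.comp_def] using this.deriv

lemma Xop_eq {g : H → ℝ} {p : H} (hg : DifferentiableAt ℝ g p) :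
    Xop g p = fderiv ℝ g p (vX p) := by
  have h : vX p = ((1, 0, 0) : H) + (-(p.2.1 / 2)) • ((0,0,1) : H) := by
    simp [vX, Prod.ext_iff]
  rw [Xop, pdx_eq hg, pdz_eq hg, h, map_add, _root_.map_smul]
  simp; ring

lemma Yop_eq {g : H → ℝ} {p : H} (hg : DifferentiableAt ℝ g p) :
    Yop g p = fderiv ℝ g p (vY p) := by
  have h : vY p = ((0, 1, 0) : H) + (p.1 / 2) • ((0,0,1) : H) := by
    simp [vY, Prod.ext_iff]
  rw [Yop, pdy_eq hg, pdz_eq hg, h, map_add, _root_.map_smul]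
  simp

lemma Zop_eq {g : H → ℝ} {p : H} (hg : DifferentiableAt ℝ g p) :
    Zop g p = fderiv ℝ g p e3 := pdz_eq hg

lemma contDiff_vX : ContDiff ℝ (⊤ : ℕ∞) vX := by
  have : vX = fun p : H => ((1:ℝ), (0:ℝ), -(p.2.1 * (1/2))) := by
    funext p; simp [vX]; ring
  rw [this]; fun_prop

lemma contDiff_vY : ContDiff ℝ (⊤ : ℕ∞) vY := by
  have : vY = fun p : H => ((0:ℝ), (1:ℝ), p.1 * (1/2)) := by
    funext p; simp [vY]; ring
  rw [this]; fun_prop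

lemma Xop_fun {g : H → ℝ} (hg : ContDiff ℝ (⊤ : ℕ∞) g) :
    Xop g = fun q => fderiv ℝ g q (vX q) :=
  funext fun q => Xop_eq (hg.differentiable (by simp) q)

lemma Yop_fun {g : H → ℝ} (hg : ContDiff ℝ (⊤ : ℕ∞) g) :
    Yop g = fun q => fderiv ℝ g q (vY q) :=
  funext fun q => Yop_eq (hg.differentiable (by simp) q)

lemma Zop_fun {g : H → ℝ} (hg : ContDiff ℝ (⊤ : ℕ∞) g) :
    Zop g = fun q => fderiv ℝ g q e3 :=
  funext fun q => Zop_eq (hg.differentiable (by simp) q)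

lemma Xop_smooth {g : H → ℝ} (hg : ContDiff ℝ (⊤ : ℕ∞) g) : ContDiff ℝ (⊤ : ℕ∞) (Xop g) := by
  rw [Xop_fun hg]
  exact (hg.fderiv_right (by simp)).clm_apply contDiff_vX

lemma Yop_smooth {g : H → ℝ} (hg : ContDiff ℝ (⊤ : ℕ∞) g) : ContDiff ℝ (⊤ : ℕ∞) (Yop g) := by
  rw [Yop_fun hg]
  exact (hg.fderiv_right (by simp)).clm_apply contDiff_vY

lemma Zop_smooth {g : H → ℝ} (hg : ContDiff ℝ (⊤ : ℕ∞) g) : ContDiff ℝ (⊤ : ℕ∞) (Zop g) := by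
  rw [Zop_fun hg]
  exact (hg.fderiv_right (by simp)).clm_apply contDiff_const

def cYL : H →L[ℝ] ℝ := (ContinuousLinearMap.fst ℝ ℝ ℝ).comp (ContinuousLinearMap.snd ℝ ℝ (ℝ × ℝ))
def cXL : H →L[ℝ] ℝ := ContinuousLinearMap.fst ℝ ℝ (ℝ × ℝ)

lemma hasFDerivAt_vX (p : H) :
    HasFDerivAt vX ((((-(1/2) : ℝ) • cYL)).smulRight e3) p := by
  have h : vX = fun q : H => ((1:ℝ), (0:ℝ), (0:ℝ)) + (((-(1/2) : ℝ) • cYL) q) • e3 := by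
    funext q
    simp [vX, e3, cYL, Prod.ext_iff]
    ring
  rw [h]
  exact ((((-(1/2) : ℝ) • cYL)).hasFDerivAt.smul_const e3).const_add _

lemma hasFDerivAt_vY (p : H) :
    HasFDerivAt vY ((((1/2 : ℝ) • cXL)).smulRight e3) p := by
  have h : vY = fun q : H => ((0:ℝ), (1:ℝ), (0:ℝ)) + (((1/2 : ℝ) • cXL) q) • e3 := by
    funext q
    simp [vY, e3, cXL, Prod.ext_iff]
    ring
  rw [h]
  exact ((((1/2 : ℝ) • cXL)).hasFDerivAt.smul_const e3).const_add _

lemma fderiv_vX (p u : H) : fderiv ℝ vX p u = (-(u.2.1 / 2)) • e3 := by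
  rw [(hasFDerivAt_vX p).fderiv]
  simp [cYL, e3]
  ring

lemma fderiv_vY (p u : H) : fderiv ℝ vY p u = (u.1 / 2) • e3 := by
  rw [(hasFDerivAt_vY p).fderiv]
  simp [cXL, e3]
  ring

lemma snd_symm {g : H → ℝ} (hg : ContDiff ℝ (⊤ : ℕ∞) g) (p v w : H) :
    fderiv ℝ (fderiv ℝ g) p v w = fderiv ℝ (fderiv ℝ g) p w v :=
  second_derivative_symmetric (fun y => (hg.differentiable (by simp) y).hasFDerivAt)
    (((hg.fderiv_right (m := 1) (by exact WithTop.coe_le_coe.mpr le_top)).differentiable one_ne_zero p).hasFDerivAt) v w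

lemma fderiv_fd {g : H → ℝ} (hg : ContDiff ℝ (⊤ : ℕ∞) g) {w : H → H} {p : H}
    (hw : DifferentiableAt ℝ w p) (u : H) :
    fderiv ℝ (fun q => fderiv ℝ g q (w q)) p u
      = fderiv ℝ (fderiv ℝ g) p u (w p) + fderiv ℝ g p (fderiv ℝ w p u) := by
  rw [fderiv_clm_apply ((hg.fderiv_right (m := 1) (by exact WithTop.coe_le_coe.mpr le_top)).differentiable one_ne_zero p) hw]
  simp
  ring

lemma vX_1 (p : H) : (vX p).1 = 1 := rfl
lemma vY_21 (p : H) : (vY p).2.1 = 1 := rfl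

lemma XY_eq {g : H → ℝ} (hg : ContDiff ℝ (⊤ : ℕ∞) g) (p : H) :
    Xop (Yop g) p = fderiv ℝ (fderiv ℝ g) p (vX p) (vY p) + (1/2) * Zop g p := by
  rw [Xop_eq ((Yop_smooth hg).differentiable (by simp) p), Yop_fun hg,
    fderiv_fd hg (contDiff_vY.differentiable (by simp) p) (vX p), fderiv_vY, vX_1,
    _root_.map_smul, Zop_eq (hg.differentiable (by simp) p)]
  simp

lemma YX_eq {g : H → ℝ} (hg : ContDiff ℝ (⊤ : ℕ∞) g) (p : H) :
    Yop (Xop g) p = fderiv ℝ (fderiv ℝ g) p (vY p) (vX p) - (1/2) * Zop g p := by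
  rw [Yop_eq ((Xop_smooth hg).differentiable (by simp) p), Xop_fun hg,
    fderiv_fd hg (contDiff_vX.differentiable (by simp) p) (vY p), fderiv_vX, vY_21,
    _root_.map_smul, Zop_eq (hg.differentiable (by simp) p)]
  simp
  ring

lemma XZ_eq {g : H → ℝ} (hg : ContDiff ℝ (⊤ : ℕ∞) g) (p : H) :
    Xop (Zop g) p = fderiv ℝ (fderiv ℝ g) p (vX p) e3 := by
  rw [Xop_eq ((Zop_smooth hg).differentiable (by simp) p), Zop_fun hg,
    fderiv_fd hg (differentiableAt_const e3) (vX p)]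
  simp

lemma YZ_eq {g : H → ℝ} (hg : ContDiff ℝ (⊤ : ℕ∞) g) (p : H) :
    Yop (Zop g) p = fderiv ℝ (fderiv ℝ g) p (vY p) e3 := by
  rw [Yop_eq ((Zop_smooth hg).differentiable (by simp) p), Zop_fun hg,
    fderiv_fd hg (differentiableAt_const e3) (vY p)]
  simp

lemma ZX_eq {g : H → ℝ} (hg : ContDiff ℝ (⊤ : ℕ∞) g) (p : H) :
    Zop (Xop g) p = fderiv ℝ (fderiv ℝ g) p e3 (vX p) := by
  rw [Zop_eq ((Xop_smooth hg).differentiable (by simp) p), Xop_fun hg,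
    fderiv_fd hg (contDiff_vX.differentiable (by simp) p) e3, fderiv_vX]
  simp [e3]

lemma ZY_eq {g : H → ℝ} (hg : ContDiff ℝ (⊤ : ℕ∞) g) (p : H) :
    Zop (Yop g) p = fderiv ℝ (fderiv ℝ g) p e3 (vY p) := by
  rw [Zop_eq ((Yop_smooth hg).differentiable (by simp) p), Yop_fun hg,
    fderiv_fd hg (contDiff_vY.differentiable (by simp) p) e3, fderiv_vY]
  simp [e3]

lemma comm_XY {g : H → ℝ} (hg : ContDiff ℝ (⊤ : ℕ∞) g) (p : H) :
    Xop (Yop g) p = Yop (Xop g) p + Zop g p := by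
  rw [XY_eq hg, YX_eq hg, snd_symm hg]
  ring

lemma comm_XZ {g : H → ℝ} (hg : ContDiff ℝ (⊤ : ℕ∞) g) (p : H) :
    Xop (Zop g) p = Zop (Xop g) p := by
  rw [XZ_eq hg, ZX_eq hg, snd_symm hg]

lemma comm_YZ {g : H → ℝ} (hg : ContDiff ℝ (⊤ : ℕ∞) g) (p : H) :
    Yop (Zop g) p = Zop (Yop g) p := by
  rw [YZ_eq hg, ZY_eq hg, snd_symm hg]

lemma Xop_add {u v : H → ℝ} {p : H} (hu : DifferentiableAt ℝ u p)
    (hv : DifferentiableAt ℝ v p) :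
    Xop (fun q => u q + v q) p = Xop u p + Xop v p := by
  rw [Xop_eq (hu.fun_add hv), fderiv_fun_add hu hv, Xop_eq hu, Xop_eq hv]
  simp

lemma Xop_sub {u v : H → ℝ} {p : H} (hu : DifferentiableAt ℝ u p)
    (hv : DifferentiableAt ℝ v p) :
    Xop (fun q => u q - v q) p = Xop u p - Xop v p := by
  rw [Xop_eq (hu.fun_sub hv), fderiv_fun_sub hu hv, Xop_eq hu, Xop_eq hv]
  simp

lemma Xop_mul {u v : H → ℝ} {p : H} (hu : DifferentiableAt ℝ u p)
    (hv : DifferentiableAt ℝ v p) :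
    Xop (fun q => u q * v q) p = Xop u p * v p + u p * Xop v p := by
  rw [Xop_eq (hu.fun_mul hv), fderiv_fun_mul hu hv, Xop_eq hu, Xop_eq hv]
  simp
  ring

lemma Xop_sq {u : H → ℝ} {p : H} (hu : DifferentiableAt ℝ u p) :
    Xop (fun q => u q ^ 2) p = 2 * u p * Xop u p := by
  have h : (fun q => u q ^ 2) = fun q => u q * u q := by
    funext q; ring
  rw [h, Xop_mul hu hu]
  ring

lemma Yop_add {u v : H → ℝ} {p : H} (hu : DifferentiableAt ℝ u p)
    (hv : DifferentiableAt ℝ v p) :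
    Yop (fun q => u q + v q) p = Yop u p + Yop v p := by
  rw [Yop_eq (hu.fun_add hv), fderiv_fun_add hu hv, Yop_eq hu, Yop_eq hv]
  simp

lemma Yop_mul {u v : H → ℝ} {p : H} (hu : DifferentiableAt ℝ u p)
    (hv : DifferentiableAt ℝ v p) :
    Yop (fun q => u q * v q) p = Yop u p * v p + u p * Yop v p := by
  rw [Yop_eq (hu.fun_mul hv), fderiv_fun_mul hu hv, Yop_eq hu, Yop_eq hv]
  simp
  ring

lemma Yop_sq {u : H → ℝ} {p : H} (hu : DifferentiableAt ℝ u p) :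
    Yop (fun q => u q ^ 2) p = 2 * u p * Yop u p := by
  have h : (fun q => u q ^ 2) = fun q => u q * u q := by
    funext q; ring
  rw [h, Yop_mul hu hu]
  ring

lemma Xop_two_mul {u v : H → ℝ} {p : H} (hu : DifferentiableAt ℝ u p)
    (hv : DifferentiableAt ℝ v p) :
    Xop (fun q => 2 * u q * v q) p = 2 * (Xop u p * v p + u p * Xop v p) := by
  have h : (fun q => 2 * u q * v q) = fun q => (u q + u q) * v q := funext fun q => by ring
  rw [h, Xop_mul (hu.fun_add hu) hv, Xop_add hu hu]
  ring

lemma Yop_two_mul {u v : H → ℝ} {p : H} (hu : DifferentiableAt ℝ u p)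
    (hv : DifferentiableAt ℝ v p) :
    Yop (fun q => 2 * u q * v q) p = 2 * (Yop u p * v p + u p * Yop v p) := by
  have h : (fun q => 2 * u q * v q) = fun q => (u q + u q) * v q := funext fun q => by ring
  rw [h, Yop_mul (hu.fun_add hu) hv, Yop_add hu hu]
  ring

theorem gamma2_horizontal (f : H → ℝ) (hf : ContDiff ℝ (⊤ : ℕ∞) f) (p : H) :
    (1 / 2) * (Lop (fun q => (Xop f q) ^ 2 + (Yop f q) ^ 2) p
        - 2 * (Xop f p * Xop (Lop f) p + Yop f p * Yop (Lop f) p))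
      = (Xop (Xop f) p) ^ 2 + (Yop (Yop f) p) ^ 2 + (Xop (Yop f) p) ^ 2
        + (Yop (Xop f) p) ^ 2
        - 2 * Xop f p * Yop (Zop f) p + 2 * Yop f p * Xop (Zop f) p := by
  have hd : ∀ {g : H → ℝ}, ContDiff ℝ (⊤ : ℕ∞) g → ∀ q, DifferentiableAt ℝ g q :=
    fun hg q => hg.differentiable (by simp) q
  have hF1 := Xop_smooth hf
  have hF2 := Yop_smooth hf
  have hXX := Xop_smooth hF1
  have hXY := Xop_smooth hF2
  have hYX := Yop_smooth hF1
  have hYY := Yop_smooth hF2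
  have hZ := Zop_smooth hf
  have hXG : Xop (fun q => Xop f q ^ 2 + Yop f q ^ 2)
      = fun q => 2 * Xop f q * Xop (Xop f) q + 2 * Yop f q * Xop (Yop f) q := by
    funext q
    rw [Xop_add ((hd hF1 q).fun_pow 2) ((hd hF2 q).fun_pow 2), Xop_sq (hd hF1 q), Xop_sq (hd hF2 q)]
  have hYG : Yop (fun q => Xop f q ^ 2 + Yop f q ^ 2)
      = fun q => 2 * Xop f q * Yop (Xop f) q + 2 * Yop f q * Yop (Yop f) q := by
    funext q
    rw [Yop_add ((hd hF1 q).fun_pow 2) ((hd hF2 q).fun_pow 2), Yop_sq (hd hF1 q), Yop_sq (hd hF2 q)]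
  have eXX : Xop (Xop (fun q => Xop f q ^ 2 + Yop f q ^ 2)) p
      = 2 * (Xop (Xop f) p * Xop (Xop f) p + Xop f p * Xop (Xop (Xop f)) p)
        + 2 * (Xop (Yop f) p * Xop (Yop f) p + Yop f p * Xop (Xop (Yop f)) p) := by
    rw [hXG, Xop_add (hd ((contDiff_const.mul hF1).mul hXX) p)
        (hd ((contDiff_const.mul hF2).mul hXY) p),
      Xop_two_mul (hd hF1 p) (hd hXX p), Xop_two_mul (hd hF2 p) (hd hXY p)]
  have eYY : Yop (Yop (fun q => Xop f q ^ 2 + Yop f q ^ 2)) p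
      = 2 * (Yop (Xop f) p * Yop (Xop f) p + Xop f p * Yop (Yop (Xop f)) p)
        + 2 * (Yop (Yop f) p * Yop (Yop f) p + Yop f p * Yop (Yop (Yop f)) p) := by
    rw [hYG, Yop_add (hd ((contDiff_const.mul hF1).mul hYX) p)
        (hd ((contDiff_const.mul hF2).mul hYY) p),
      Yop_two_mul (hd hF1 p) (hd hYX p), Yop_two_mul (hd hF2 p) (hd hYY p)]
  have eXL : Xop (Lop f) p = Xop (Xop (Xop f)) p + Xop (Yop (Yop f)) p := by
    have h : Lop f = fun q => Xop (Xop f) q + Yop (Yop f) q := rfl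
    rw [h, Xop_add (hd hXX p) (hd hYY p)]
  have eYL : Yop (Lop f) p = Yop (Xop (Xop f)) p + Yop (Yop (Yop f)) p := by
    have h : Lop f = fun q => Xop (Xop f) q + Yop (Yop f) q := rfl
    rw [h, Yop_add (hd hXX p) (hd hYY p)]
  have hcomm1 : Xop (Yop f) = fun q => Yop (Xop f) q + Zop f q :=
    funext fun q => comm_XY hf q
  have hcomm2 : Yop (Xop f) = fun q => Xop (Yop f) q - Zop f q := by
    funext q
    have := comm_XY hf q
    linarith
  have c1 : Xop (Yop (Yop f)) p = Yop (Yop (Xop f)) p + 2 * Yop (Zop f) p := by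
    rw [comm_XY hF2 p, hcomm1, Yop_add (hd hYX p) (hd hZ p), ← comm_YZ hf p]
    ring
  have c2 : Yop (Xop (Xop f)) p = Xop (Xop (Yop f)) p - 2 * Xop (Zop f) p := by
    have h := comm_XY hF1 p
    rw [hcomm2, Xop_sub (hd hXY p) (hd hZ p), ← comm_XZ hf p] at h
    linarith
  have eL : Lop (fun q => Xop f q ^ 2 + Yop f q ^ 2) p
      = Xop (Xop (fun q => Xop f q ^ 2 + Yop f q ^ 2)) p
        + Yop (Yop (fun q => Xop f q ^ 2 + Yop f q ^ 2)) p := rfl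
  rw [eL, eXX, eYY, eXL, eYL, c1, c2]
  ring

end
end

section
/- For every real ν > 0, every smooth function f : ℝ³ → ℝ, and every point of ℝ³, the generalized curvature inequality holds: Γ₂^hori(f,f) + ν Γ₂^vert(f,f) ≥ −(1/ν) ( (Xf)² + (Yf)² + ν (Zf)² ), where Γ₂^hori(f,f) := (X²f)² + (Y²f)² + (XYf)² + (YXf)² − 2(Xf)(YZf) + 2(Yf)(XZf) and Γ₂^vert(f,f) := (XZf)² + (YZf)². -/
open MeasureTheory ProbabilityTheory

noncomputable section

theorem generalized_curvature_inequality (ν : ℝ) (hν : 0 < ν)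
    (f : H → ℝ) (hf : ContDiff ℝ (⊤ : ℕ∞) f) (p : H) :
    (Xop (Xop f) p) ^ 2 + (Yop (Yop f) p) ^ 2 + (Xop (Yop f) p) ^ 2
      + (Yop (Xop f) p) ^ 2
      - 2 * Xop f p * Yop (Zop f) p + 2 * Yop f p * Xop (Zop f) p
      + ν * ((Xop (Zop f) p) ^ 2 + (Yop (Zop f) p) ^ 2)
    ≥ -(1 / ν) * ((Xop f p) ^ 2 + (Yop f p) ^ 2 + ν * (Zop f p) ^ 2) := by
  have h1 : (1/ν) * ν = 1 := by field_simp
  nlinarith [h1, sq_nonneg (ν * Yop (Zop f) p - Xop f p),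
    sq_nonneg (ν * Xop (Zop f) p + Yop f p),
    mul_nonneg hν.le (sq_nonneg (Xop (Xop f) p)),
    mul_nonneg hν.le (sq_nonneg (Yop (Yop f) p)),
    mul_nonneg hν.le (sq_nonneg (Xop (Yop f) p)),
    mul_nonneg hν.le (sq_nonneg (Yop (Xop f) p)),
    mul_nonneg hν.le (sq_nonneg (Zop f p)), hν, sq_nonneg ν]

end
end
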